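/- The rank map of the previous statement is a bijection from the set of binary words of length n with exactly w ones onto {0, 1, ..., C(n,w) - 1}. -/

import Mathlib

/-- Hamming weight (number of ones) of a binary word. -/
def wt {n : ℕ} (v : Fin n → Bool) : ℕ :=
  (Finset.univ.filter fun i => v i = true).card

/-- Strict lexicographic order on binary words (most significant letter first,
with `false < true`, i.e. `0 < 1`). -/
def lexLt {n : ℕ} (u v : Fin n → Bool) : Prop :=
  ∃ k : Fin n, (∀ i < k, u i = v i) ∧ u k = false ∧ v k = true

/-- The rank formula `rank(x₁…xₙ) = ∑_{k=1}^n x_k · C(n-k, w - ∑_{i<k} x_i)`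
(with `C(t,m) = 0` when `t < m`). -/
def rankF {n : ℕ} (w : ℕ) (v : Fin n → Bool) : ℕ :=
  ∑ k : Fin n, (if v k then 1 else 0) *
    Nat.choose (n - 1 - (k : ℕ))
      (w - (Finset.univ.filter fun i : Fin n => i < k ∧ v i = true).card)

/-! Peeling off the first letter, `rankF w (0 :: v) = rankF w v` and
`rankF w (1 :: v) = C(n-1, w) + rankF (w-1) v`. This mirrors Pascal's rule
`C(n, w) = C(n-1, w) + C(n-1, w-1)`: by induction on `n`, the words starting with `0` are ranked
bijectively onto `[0, C(n-1, w))` and those starting with `1` onto the remaining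
`[C(n-1, w), C(n, w))`. -/

lemma wt_cons {n : ℕ} (b : Bool) (v : Fin n → Bool) :
    wt (Fin.cons b v : Fin (n + 1) → Bool) = b.toNat + wt v := by
  simp only [wt, Finset.card_filter, Fin.sum_univ_succ, Fin.cons_zero, Fin.cons_succ]
  cases b <;> rfl

lemma card_filter_lt_succ_cons {n : ℕ} (b : Bool) (v : Fin n → Bool) (k : Fin n) :
    (Finset.univ.filter fun i : Fin (n + 1) =>
        i < k.succ ∧ (Fin.cons b v : Fin (n + 1) → Bool) i = true).card
      = b.toNat + (Finset.univ.filter fun j : Fin n => j < k ∧ v j = true).card := by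
  simp only [Finset.card_filter, Fin.sum_univ_succ, Fin.cons_zero, Fin.cons_succ,
    Fin.succ_pos, Fin.succ_lt_succ_iff, true_and]
  cases b <;> rfl

lemma rankF_cons {n : ℕ} (w : ℕ) (b : Bool) (v : Fin n → Bool) :
    rankF w (Fin.cons b v : Fin (n + 1) → Bool)
      = (if b then n.choose w else 0) + rankF (w - b.toNat) v := by
  rw [rankF, Fin.sum_univ_succ, rankF]
  congr 1
  · cases b <;> simp
  · refine Finset.sum_congr rfl fun k _ => ?_
    rw [card_filter_lt_succ_cons, Fin.cons_succ, Fin.val_succ]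
    congr 2 <;> omega

lemma rankF_lt_choose {n w : ℕ} (v : Fin n → Bool) (hv : wt v = w) :
    rankF w v < n.choose w := by
  induction v using Fin.consInduction generalizing w with
  | elim0 =>
    subst hv
    simp [rankF, wt]
  | cons b v ih =>
    rw [wt_cons] at hv
    rw [rankF_cons]
    cases b with
    | false =>
      simp only [Bool.toNat_false, zero_add] at hv
      simpa using (ih hv).trans_le (Nat.choose_le_succ _ _)
    | true =>
      subst hv
      have := ih rfl
      simp only [Bool.toNat_true, if_true, add_comm 1 (wt v), Nat.choose_succ_succ',
        Nat.add_sub_cancel]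
      omega

lemma rankF_cons_false_lt_cons_true {n w : ℕ} (u v : Fin n → Bool) (hu : wt u = w) :
    rankF w (Fin.cons false u : Fin (n + 1) → Bool) < rankF w (Fin.cons true v) := by
  simpa [rankF_cons] using Nat.lt_add_right _ (rankF_lt_choose u hu)

lemma rankF_injOn {n : ℕ} (w : ℕ) :
    Set.InjOn (rankF w) {v : Fin n → Bool | wt v = w} := by
  induction n generalizing w with
  | zero => exact fun u _ v _ _ => Subsingleton.elim u v
  | succ n ih =>
    intro u hu v hv huv
    induction u using Fin.consCases with | cons a u => ?_
    induction v using Fin.consCases with | cons b v => ?_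
    simp only [Set.mem_ofPred_eq, wt_cons] at hu hv
    cases a <;> cases b <;> simp only [Bool.toNat_false, Bool.toNat_true, zero_add] at hu hv
    · simp only [rankF_cons, Bool.toNat_false] at huv
      exact congrArg _ (ih w hu hv (by simpa using huv))
    · exact absurd huv (rankF_cons_false_lt_cons_true u v hu).ne
    · exact absurd huv.symm (rankF_cons_false_lt_cons_true v u hv).ne
    · simp only [rankF_cons, if_true, Nat.add_left_cancel_iff, Bool.toNat_true] at huv
      exact congrArg _ (ih (w - 1) (show wt u = w - 1 by omega) (show wt v = w - 1 by omega) huv)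

lemma rankF_surjOn {n : ℕ} (w : ℕ) :
    Set.SurjOn (rankF w) {v : Fin n → Bool | wt v = w} {t : ℕ | t < n.choose w} := by
  induction n generalizing w with
  | zero =>
    intro t (ht : t < Nat.choose 0 w)
    cases w with
    | zero =>
      obtain rfl : t = 0 := by simpa using ht
      exact ⟨Fin.elim0, by simp [wt], by simp [rankF]⟩
    | succ w => simp at ht
  | succ n ih =>
    intro t (ht : t < (n + 1).choose w)
    by_cases hlt : t < n.choose w
    · obtain ⟨v, hv, rfl⟩ := ih w hlt
      exact ⟨Fin.cons false v, by simpa [wt_cons] using hv, by simp [rankF_cons]⟩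
    cases w with
    | zero => simp at ht hlt; omega
    | succ w =>
      rw [Nat.choose_succ_succ'] at ht
      obtain ⟨v, hv, hvt⟩ := ih w (show t - n.choose (w + 1) < n.choose w by omega)
      refine ⟨Fin.cons true v, ?_, ?_⟩
      · simpa [wt_cons, add_comm] using hv
      · simp only [rankF_cons, if_true, Bool.toNat_true, Nat.add_sub_cancel, hvt]
        omega

/-- the rank map is a bijection from the set of binary words of
length `n` with exactly `w` ones onto `{0, 1, …, C(n,w) - 1}`. -/
theorem rank_formula_bijective (n w : ℕ) :
    Set.BijOn (rankF w) {v : Fin n → Bool | wt v = w}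
      {t : ℕ | t < Nat.choose n w} :=
  ⟨fun v => rankF_lt_choose v, rankF_injOn w, rankF_surjOn w⟩
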